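/- Fix an integer k ≥ 1 and let m_n = ⌊(n−2)/(k+1)⌋. Then limsup_{n→∞} n^{1/(k+1)} ∫₀¹ (1 − (1−p)^{k+1})^{m_n} dp ≤ Γ(1 + 1/(k+1)) · (k+1)^{1/(k+1)} ≤ Γ(4/3) · 3^{1/3}. -/

import Mathlib

/-!
Since `1 - x ≤ e^{-x}`, the integral (after `p ↦ 1 - p`) is at most
`∫₀^∞ e^{-m qᴷ} dq = Γ(1 + 1/K) m^{-1/K}` with `K = k + 1`, and `n / m_n → K`.

For the constant `Γ(1 + 1/K) K^{1/K}`: `K = 2` is explicit (`Γ(3/2) = √π / 2`) and `K = 3` is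
the bound itself. For `K ≥ 4`, log-convexity of `Γ` between `1` and `5/4` gives
`Γ(1 + 1/K) ≤ Γ(5/4)^{4/K}`, so after raising to the power `3K` it suffices that
`Γ(5/4)^12 K^3 ≤ (3 Γ(4/3)^3)^K`, which follows by induction from the case `K = 4`.
That case needs `Γ(5/4) / Γ(4/3)` to within half a percent; both values are bracketed by
Euler's product `GammaSeq`, whose error is controlled by log-convexity (Bohr–Mollerup).
-/

open Real Finset Nat Filter MeasureTheory Set Topology

namespace Real

lemma log_Gamma_add_one {y : ℝ} (hy : 0 < y) :
    (log ∘ Gamma) (y + 1) = (log ∘ Gamma) y + log y := by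
  simp only [Function.comp_apply]
  rw [Gamma_add_one hy.ne', log_mul hy.ne' (Gamma_pos_of_pos hy).ne', add_comm]

lemma log_rpow_mul_factorial_div_prod {x c : ℝ} (hx : 0 < x) (hc : 0 < c) (n : ℕ) :
    log (c ^ x * n ! / ∏ j ∈ range (n + 1), (x + j))
      = x * log c + log n ! - ∑ j ∈ range (n + 1), log (x + j) := by
  have hprod : ∀ j ∈ range (n + 1), x + (j : ℝ) ≠ 0 := fun j _ => by positivity
  rw [log_div (by positivity) (prod_ne_zero_iff.2 hprod), log_mul (by positivity) (by positivity),
    log_rpow hc, log_prod hprod]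

theorem GammaSeq_le_Gamma {x : ℝ} (hx : 0 < x) {n : ℕ} (hn : n ≠ 0) :
    GammaSeq x n ≤ Gamma x := by
  have h := BohrMollerup.ge_logGammaSeq convexOn_log_Gamma log_Gamma_add_one hx hn
  rw [Function.comp_apply, Gamma_one, log_one, zero_add, BohrMollerup.logGammaSeq,
    ← log_rpow_mul_factorial_div_prod hx (by positivity)] at h
  exact (log_le_log_iff (by unfold GammaSeq; positivity) (Gamma_pos_of_pos hx)).1 h

theorem Gamma_le_rpow_mul_factorial_div_prod {x : ℝ} (hx : 0 < x) (hx' : x ≤ 1) (n : ℕ) :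
    Gamma x ≤ ((n : ℝ) + 1) ^ x * n ! / ∏ j ∈ range (n + 1), (x + j) := by
  have h := BohrMollerup.le_logGammaSeq convexOn_log_Gamma log_Gamma_add_one hx hx' n
  simp only [Function.comp_apply, Gamma_one, log_one, zero_add, BohrMollerup.logGammaSeq] at h
  rw [← log_le_log_iff (Gamma_pos_of_pos hx) (by positivity),
    log_rpow_mul_factorial_div_prod hx (by positivity)]
  linarith

lemma Gamma_one_add_mul_le_rpow {x t : ℝ} (hx : 0 < x) (ht₀ : 0 ≤ t) (ht₁ : t ≤ 1) :
    Gamma (1 + t * x) ≤ Gamma (1 + x) ^ t := by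
  have h := convexOn_log_Gamma.2 (mem_Ioi.2 one_pos) (mem_Ioi.2 (by linarith : (0 : ℝ) < 1 + x))
    (sub_nonneg.2 ht₁) ht₀ (sub_add_cancel 1 t)
  simp only [smul_eq_mul, Function.comp_apply, Gamma_one, log_one, mul_zero, zero_add] at h
  rw [show (1 - t) * 1 + t * (1 + x) = 1 + t * x by ring] at h
  have hpos : 0 < Gamma (1 + x) := Gamma_pos_of_pos (by linarith)
  rwa [← log_le_log_iff (Gamma_pos_of_pos (by positivity)) (rpow_pos_of_pos hpos _),
    log_rpow hpos]

end Real

lemma mul_natCast_pow_le_pow_of_ge {a c : ℝ} {d K₀ : ℕ} (hK₀ : 0 < K₀)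
    (hc : (1 + 1 / (K₀ : ℝ)) ^ d ≤ c) (h₀ : a * K₀ ^ d ≤ c ^ K₀) {K : ℕ}
    (hK : K₀ ≤ K) :
    a * K ^ d ≤ c ^ K := by
  induction K, hK using Nat.le_induction with
  | base => exact h₀
  | succ K hK ih =>
    have hKpos : (0 : ℝ) < K := by exact_mod_cast hK₀.trans_le hK
    have hratio : (1 + 1 / (K : ℝ)) ^ d ≤ c := by
      refine le_trans ?_ hc
      gcongr
    have hc₀ : 0 ≤ c := le_trans (by positivity) hc
    calc a * ((K + 1 : ℕ) : ℝ) ^ d = a * K ^ d * (1 + 1 / (K : ℝ)) ^ d := by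
          rw [mul_assoc, ← mul_pow]; congr 2; push_cast; field_simp
      _ ≤ c ^ K * c := mul_le_mul ih hratio (by positivity) (by positivity)
      _ = c ^ (K + 1) := (pow_succ c K).symm

lemma rpow_div_natCast_pow_mul {a : ℝ} (ha : 0 ≤ a) (r : ℝ) {K : ℕ} (hK : K ≠ 0)
    (m : ℕ) :
    (a ^ (r / K)) ^ (K * m) = a ^ (r * m) := by
  rw [← rpow_natCast, ← rpow_mul ha]
  congr 1
  push_cast
  field_simp

-- `n = 125` and `n + 1 = 81` make the roots `n ^ (1/3)` and `(n + 1) ^ (1/4)` exact.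
lemma Gamma_four_thirds_ge : (0.8913 : ℝ) ≤ Gamma (4 / 3) := by
  have h := GammaSeq_le_Gamma (x := 1 / 3) (by norm_num) (n := 125) (by norm_num)
  have hroot : ((125 : ℕ) : ℝ) ^ (1 / 3 : ℝ) = 5 := by
    rw [show ((125 : ℕ) : ℝ) = 5 ^ (3 : ℝ) by norm_num, ← rpow_mul (by norm_num)]
    norm_num
  rw [GammaSeq, hroot] at h
  rw [show (4 / 3 : ℝ) = 1 / 3 + 1 by norm_num, Gamma_add_one (by norm_num)]
  refine le_trans ?_ (mul_le_mul_of_nonneg_left h (by norm_num))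
  norm_num [prod_range_succ, Nat.factorial]

lemma Gamma_five_quarters_le : Gamma (5 / 4) ≤ (0.9075 : ℝ) := by
  have h := Gamma_le_rpow_mul_factorial_div_prod (x := 1 / 4) (by norm_num) (by norm_num) 80
  have hroot : ((80 : ℕ) + 1 : ℝ) ^ (1 / 4 : ℝ) = 3 := by
    rw [show ((80 : ℕ) + 1 : ℝ) = 3 ^ (4 : ℝ) by norm_num, ← rpow_mul (by norm_num)]
    norm_num
  rw [hroot] at h
  rw [show (5 / 4 : ℝ) = 1 / 4 + 1 by norm_num, Gamma_add_one (by norm_num)]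
  refine (mul_le_mul_of_nonneg_left h (by norm_num)).trans ?_
  norm_num [prod_range_succ, Nat.factorial]

lemma Gamma_one_add_inv_mul_rpow_le_of_four_le {K : ℕ} (hK : 4 ≤ K) :
    Gamma (1 + 1 / K) * (K : ℝ) ^ ((1 : ℝ) / K) ≤ Gamma (4 / 3) * 3 ^ ((1 : ℝ) / 3) := by
  have hK₀ : K ≠ 0 := by omega
  have hKR : (4 : ℝ) ≤ K := by exact_mod_cast hK
  have hg := Gamma_four_thirds_ge
  have hh := Gamma_five_quarters_le
  have hh₀ : 0 ≤ Gamma (5 / 4) := (Gamma_pos_of_pos (by norm_num)).le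
  have hGamma : Gamma (1 + 1 / K) ≤ Gamma (5 / 4) ^ ((4 : ℝ) / K) := by
    have h := Gamma_one_add_mul_le_rpow (x := 1 / 4) (t := 4 / K) (by norm_num) (by positivity)
      ((div_le_one (by positivity)).2 hKR)
    rwa [show (4 : ℝ) / K * (1 / 4) = 1 / K by ring,
      show (1 : ℝ) + 1 / 4 = 5 / 4 by norm_num] at h
  have hpow : Gamma (5 / 4) ^ 12 * K ^ 3 ≤ (3 * Gamma (4 / 3) ^ 3) ^ K := by
    refine mul_natCast_pow_le_pow_of_ge (K₀ := 4) (by norm_num) ?_ ?_ hK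
    · calc (1 + 1 / ((4 : ℕ) : ℝ)) ^ 3 ≤ 3 * 0.8913 ^ 3 := by norm_num
        _ ≤ 3 * Gamma (4 / 3) ^ 3 := by gcongr
    · calc Gamma (5 / 4) ^ 12 * ((4 : ℕ) : ℝ) ^ 3 ≤ 0.9075 ^ 12 * 4 ^ 3 := by
            gcongr; norm_num
        _ ≤ (3 * 0.8913 ^ 3) ^ 4 := by norm_num
        _ ≤ (3 * Gamma (4 / 3) ^ 3) ^ 4 := by gcongr
  refine le_trans (mul_le_mul_of_nonneg_right hGamma (by positivity)) ?_
  refine le_of_pow_le_pow_left₀ (n := K * 3) (by omega) (by positivity) ?_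
  calc (Gamma (5 / 4) ^ ((4 : ℝ) / K) * (K : ℝ) ^ ((1 : ℝ) / K)) ^ (K * 3)
      = Gamma (5 / 4) ^ 12 * K ^ 3 := by
        rw [mul_pow, rpow_div_natCast_pow_mul hh₀ _ hK₀,
          rpow_div_natCast_pow_mul (by positivity) _ hK₀]
        norm_num
    _ ≤ (3 * Gamma (4 / 3) ^ 3) ^ K := hpow
    _ = (Gamma (4 / 3) * 3 ^ ((1 : ℝ) / 3)) ^ (K * 3) := by
        rw [mul_comm K, pow_mul, mul_pow, mul_pow, ← rpow_natCast ((3 : ℝ) ^ ((1 : ℝ) / 3)) 3,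
          ← rpow_mul (by norm_num)]
        norm_num
        ring

lemma Gamma_three_halves_mul_sqrt_two_le :
    Gamma (1 + 1 / 2) * (2 : ℝ) ^ ((1 : ℝ) / 2) ≤ Gamma (4 / 3) * 3 ^ ((1 : ℝ) / 3) := by
  have hG : Gamma (1 + 1 / 2) = √π / 2 := by
    rw [show (1 : ℝ) + 1 / 2 = 1 / 2 + 1 by norm_num, Gamma_add_one (by norm_num),
      Gamma_one_half_eq]
    ring
  have hroot : (1.44 : ℝ) ≤ 3 ^ ((1 : ℝ) / 3) := by
    rw [show (1.44 : ℝ) = (1.44 ^ (3 : ℝ)) ^ ((1 : ℝ) / 3) by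
      rw [← rpow_mul (by norm_num)]; norm_num]
    exact rpow_le_rpow (by positivity) (by norm_num) (by norm_num)
  have hsq : (√π / 2 * √2) ^ 2 = π / 2 := by
    rw [mul_pow, div_pow, sq_sqrt pi_pos.le, sq_sqrt (by norm_num)]
    ring
  calc Gamma (1 + 1 / 2) * (2 : ℝ) ^ ((1 : ℝ) / 2) = √π / 2 * √2 := by
        rw [hG, sqrt_eq_rpow 2]
    _ ≤ 0.8913 * 1.44 :=
        le_of_pow_le_pow_left₀ two_ne_zero (by norm_num) (by rw [hsq]; linarith [pi_lt_d2])
    _ ≤ Gamma (4 / 3) * 3 ^ ((1 : ℝ) / 3) :=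
        mul_le_mul Gamma_four_thirds_ge hroot (by norm_num) (Gamma_pos_of_pos (by norm_num)).le

theorem Gamma_one_add_inv_mul_rpow_le {K : ℕ} (hK : 2 ≤ K) :
    Gamma (1 + 1 / K) * (K : ℝ) ^ ((1 : ℝ) / K) ≤ Gamma (4 / 3) * 3 ^ ((1 : ℝ) / 3) := by
  obtain rfl | rfl | hK4 : K = 2 ∨ K = 3 ∨ 4 ≤ K := by omega
  · exact_mod_cast Gamma_three_halves_mul_sqrt_two_le
  · norm_num
  · exact Gamma_one_add_inv_mul_rpow_le_of_four_le hK4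

lemma integral_one_sub_pow_pow_le {d m : ℕ} (hd : 0 < d) (hm : 0 < m) :
    ∫ q in (0 : ℝ)..1, (1 - q ^ d) ^ m ≤ Gamma (1 + 1 / d) / (m : ℝ) ^ ((1 : ℝ) / d) := by
  have hdR : (0 : ℝ) < d := by exact_mod_cast hd
  have hmR : (0 : ℝ) < m := by exact_mod_cast hm
  have hexp : ∀ q ∈ Ioc (0 : ℝ) 1, (1 - q ^ d) ^ m ≤ exp (-m * q ^ (d : ℝ)) := by
    intro q hq
    have hqd : 0 ≤ 1 - q ^ d := sub_nonneg.2 (pow_le_one₀ hq.1.le hq.2)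
    calc (1 - q ^ d) ^ m ≤ exp (-q ^ d) ^ m := by
          gcongr
          linarith [add_one_le_exp (-q ^ d)]
      _ = exp (-m * q ^ (d : ℝ)) := by rw [← exp_nat_mul, rpow_natCast]; ring_nf
  have hint : IntegrableOn (fun q : ℝ => exp (-m * q ^ (d : ℝ))) (Ioi 0) := by
    simpa using integrableOn_rpow_mul_exp_neg_mul_rpow (s := 0) (by norm_num) hdR hmR
  rw [intervalIntegral.integral_of_le zero_le_one]
  calc ∫ q in Ioc (0 : ℝ) 1, (1 - q ^ d) ^ m
      ≤ ∫ q in Ioc (0 : ℝ) 1, exp (-m * q ^ (d : ℝ)) :=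
        setIntegral_mono_on (Continuous.integrableOn_Ioc (by fun_prop))
          (hint.mono_set Ioc_subset_Ioi_self) measurableSet_Ioc hexp
    _ ≤ ∫ q in Ioi (0 : ℝ), exp (-m * q ^ (d : ℝ)) :=
        setIntegral_mono_set hint (.of_forall fun _ => (exp_pos _).le)
          Ioc_subset_Ioi_self.eventuallyLE
    _ = Gamma (1 + 1 / d) / (m : ℝ) ^ ((1 : ℝ) / d) := by
        rw [integral_exp_neg_mul_rpow hdR hmR, neg_div, rpow_neg hmR.le, add_comm]
        ring

lemma tendsto_natCast_div_natSub_div (a : ℕ) {K : ℕ} (hK : 0 < K) :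
    Tendsto (fun n : ℕ => (n : ℝ) / ((n - a) / K : ℕ)) atTop (𝓝 K) := by
  have hKR : (0 : ℝ) < K := by exact_mod_cast hK
  suffices h : Tendsto (fun n : ℕ => (((n - a) / K : ℕ) : ℝ) / n) atTop (𝓝 (1 / K)) by
    simpa using h.inv₀ (by positivity)
  have hlower :
      Tendsto (fun n : ℕ => 1 / (K : ℝ) - (a + K) / K * (1 / n)) atTop (𝓝 (1 / K)) := by
    simpa using tendsto_const_nhds.sub
      (tendsto_one_div_atTop_nhds_zero_nat.const_mul ((a + K) / K : ℝ))
  refine tendsto_of_tendsto_of_tendsto_of_le_of_le' hlower tendsto_const_nhds ?_ ?_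
  all_goals filter_upwards [eventually_gt_atTop 0] with n hn
  all_goals have hnR : (0 : ℝ) < n := by exact_mod_cast hn
  · have hlt : ((n - a : ℕ) : ℝ) < K * (((n - a) / K : ℕ) + 1) := by
      exact_mod_cast Nat.lt_mul_div_succ (n - a) hK
    have hsub : (n : ℝ) ≤ (n - a : ℕ) + a := by exact_mod_cast le_tsub_add
    rw [le_div_iff₀ hnR]
    field_simp
    nlinarith
  · have hle : (((n - a) / K : ℕ) : ℝ) * K ≤ n := by
      exact_mod_cast (Nat.div_mul_le_self _ _).trans (Nat.sub_le n a)
    rw [div_le_div_iff₀ hnR hKR]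
    linarith

lemma limsup_rpow_mul_integral_le (a : ℕ) {K : ℕ} (hK : 0 < K) :
    limsup (fun n : ℕ => (n : ℝ) ^ ((1 : ℝ) / K)
        * ∫ p in (0 : ℝ)..1, (1 - (1 - p) ^ K) ^ ((n - a) / K)) atTop
      ≤ Gamma (1 + 1 / K) * (K : ℝ) ^ ((1 : ℝ) / K) := by
  have hKR : (0 : ℝ) < K := by exact_mod_cast hK
  have hbound : Tendsto
      (fun n : ℕ => Gamma (1 + 1 / K) * ((n : ℝ) / ((n - a) / K : ℕ)) ^ ((1 : ℝ) / K)) atTop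
      (𝓝 (Gamma (1 + 1 / K) * (K : ℝ) ^ ((1 : ℝ) / K))) :=
    ((tendsto_natCast_div_natSub_div a hK).rpow_const (.inl hKR.ne')).const_mul _
  have hnonneg : ∀ n : ℕ, 0 ≤ (n : ℝ) ^ ((1 : ℝ) / K)
      * ∫ p in (0 : ℝ)..1, (1 - (1 - p) ^ K) ^ ((n - a) / K) := fun n =>
    mul_nonneg (by positivity) <| intervalIntegral.integral_nonneg zero_le_one fun p hp =>
      pow_nonneg (sub_nonneg.2 (pow_le_one₀ (by linarith [hp.2]) (by linarith [hp.1]))) _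
  have hle : ∀ᶠ n : ℕ in atTop, (n : ℝ) ^ ((1 : ℝ) / K)
      * (∫ p in (0 : ℝ)..1, (1 - (1 - p) ^ K) ^ ((n - a) / K))
      ≤ Gamma (1 + 1 / K) * ((n : ℝ) / ((n - a) / K : ℕ)) ^ ((1 : ℝ) / K) := by
    filter_upwards [eventually_ge_atTop (a + K)] with n hn
    have hm : 0 < (n - a) / K := Nat.div_pos (by omega) hK
    have hreflect : ∫ p in (0 : ℝ)..1, (1 - (1 - p) ^ K) ^ ((n - a) / K)
        = ∫ q in (0 : ℝ)..1, (1 - q ^ K) ^ ((n - a) / K) := by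
      simpa using intervalIntegral.integral_comp_sub_left (a := 0) (b := 1)
        (fun q : ℝ => (1 - q ^ K) ^ ((n - a) / K)) 1
    calc (n : ℝ) ^ ((1 : ℝ) / K) * ∫ p in (0 : ℝ)..1, (1 - (1 - p) ^ K) ^ ((n - a) / K)
        ≤ (n : ℝ) ^ ((1 : ℝ) / K)
            * (Gamma (1 + 1 / K) / (((n - a) / K : ℕ) : ℝ) ^ ((1 : ℝ) / K)) := by
          rw [hreflect]
          gcongr
          exact integral_one_sub_pow_pow_le hK hm
      _ = Gamma (1 + 1 / K) * ((n : ℝ) / ((n - a) / K : ℕ)) ^ ((1 : ℝ) / K) := by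
          rw [div_rpow (by positivity) (by positivity)]
          ring
  calc _ ≤ limsup (fun n : ℕ =>
          Gamma (1 + 1 / K) * ((n : ℝ) / ((n - a) / K : ℕ)) ^ ((1 : ℝ) / K)) atTop :=
        limsup_le_limsup hle (isCoboundedUnder_le_of_le atTop hnonneg) hbound.isBoundedUnder_le
    _ = _ := hbound.limsup_eq

/-- For fixed `k ≥ 1` and `m_n = ⌊(n−2)/(k+1)⌋`,
`limsup_{n→∞} n^{1/(k+1)} ∫₀¹ (1−(1−p)^{k+1})^{m_n} dp
  ≤ Γ(1+1/(k+1)) (k+1)^{1/(k+1)} ≤ Γ(4/3) · 3^{1/3}`. -/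
theorem stmt15 (k : ℕ) (hk : 1 ≤ k) :
    limsup (fun n : ℕ =>
        (n : ℝ) ^ ((1 : ℝ) / (k + 1))
          * ∫ p in (0:ℝ)..1, (1 - (1 - p) ^ (k + 1)) ^ ((n - 2) / (k + 1) : ℕ)) atTop
        ≤ Real.Gamma (1 + 1 / (k + 1)) * ((k : ℝ) + 1) ^ ((1 : ℝ) / (k + 1)) ∧
      Real.Gamma (1 + 1 / (k + 1)) * ((k : ℝ) + 1) ^ ((1 : ℝ) / (k + 1))
        ≤ Real.Gamma (4 / 3) * (3 : ℝ) ^ ((1 : ℝ) / 3) := by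
  have hlimsup := limsup_rpow_mul_integral_le 2 (Nat.succ_pos k)
  have hconst := Gamma_one_add_inv_mul_rpow_le (K := k + 1) (by omega)
  push_cast at hlimsup hconst
  exact ⟨hlimsup, hconst⟩
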